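/- Let R be a Noetherian ring of prime characteristic p > 0 and I an ideal of R, and define Fte(I) as the smallest e with (I^F)^{[p^e]} = I^{[p^e]}. Then for every e ≥ 0 one has Fte(I) ≤ Fte(I^{[p^e]}) + e. -/
import Mathlib

def frobPow {R : Type*} [CommRing R] (I : Ideal R) (q : ℕ) : Ideal R :=
  Ideal.span ((fun r => r ^ q) '' (I : Set R))

def frobClosureSet {R : Type*} [CommRing R] (p : ℕ) (I : Ideal R) : Set R :=
  {x | ∃ e : ℕ, x ^ p ^ e ∈ frobPow I (p ^ e)}

/-- The Frobenius test exponent of an ideal: the least `e` with `(I^F)^{[p^e]} = I^{[p^e]}`. -/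
noncomputable def fte {R : Type*} [CommRing R] (p : ℕ) (I : Ideal R) : ℕ :=
  sInf {e | Ideal.span ((fun r => r ^ p ^ e) '' frobClosureSet p I) = frobPow I (p ^ e)}

section Aux

variable {R : Type*} [CommRing R] (p : ℕ) [Fact p.Prime] [CharP R p]

lemma frobPow_eq_map (I : Ideal R) (e : ℕ) :
    frobPow I (p ^ e) = I.map (iterateFrobenius R p e) := by
  rw [frobPow, Ideal.map]
  have h : ⇑(iterateFrobenius R p e) = fun r : R => r ^ p ^ e :=
    funext (iterateFrobenius_def p e)
  rw [h]

lemma frobPow_frobPow (I : Ideal R) (a b : ℕ) :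
    frobPow (frobPow I (p ^ a)) (p ^ b) = frobPow I (p ^ (a + b)) := by
  rw [frobPow_eq_map p, frobPow_eq_map p, frobPow_eq_map p, Ideal.map_map,
    Nat.add_comm a b, iterateFrobenius_add]

lemma frobPow_mem_mono (I : Ideal R) {a b : ℕ} (hab : a ≤ b) {x : R}
    (hx : x ^ p ^ a ∈ frobPow I (p ^ a)) : x ^ p ^ b ∈ frobPow I (p ^ b) := by
  obtain ⟨c, rfl⟩ := Nat.exists_eq_add_of_le hab
  rw [frobPow_eq_map p] at hx ⊢
  have := Ideal.mem_map_of_mem (iterateFrobenius R p c) hx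
  rw [Ideal.map_map, ← iterateFrobenius_add] at this
  rwa [iterateFrobenius_def, ← pow_mul, ← pow_add, Nat.add_comm c a] at this

lemma self_subset_frobClosureSet (I : Ideal R) :
    (I : Set R) ⊆ frobClosureSet p I := by
  intro x hx
  refine ⟨0, ?_⟩
  rw [pow_zero, pow_one, frobPow]
  apply Ideal.subset_span
  exact ⟨x, hx, pow_one x⟩

end Aux

section Exists

variable {R : Type*} [CommRing R] [IsNoetherianRing R] (p : ℕ) [Fact p.Prime] [CharP R p]

/-- The Frobenius closure as a submodule (its carrier is `frobClosureSet`). -/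
def frobClosureIdeal (I : Ideal R) : Ideal R where
  carrier := frobClosureSet p I
  zero_mem' := ⟨0, by simpa using Ideal.zero_mem _⟩
  add_mem' := by
    rintro a b ⟨m, hm⟩ ⟨n, hn⟩
    refine ⟨max m n, ?_⟩
    rw [add_pow_char_pow]
    exact Ideal.add_mem _ (frobPow_mem_mono p I (le_max_left m n) hm)
      (frobPow_mem_mono p I (le_max_right m n) hn)
  smul_mem' := by
    rintro c a ⟨m, hm⟩
    refine ⟨m, ?_⟩
    rw [smul_eq_mul, mul_pow]
    exact Ideal.mul_mem_left _ _ hm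

lemma exists_fte_mem (I : Ideal R) :
    {e | Ideal.span ((fun r => r ^ p ^ e) '' frobClosureSet p I)
      = frobPow I (p ^ e)}.Nonempty := by
  obtain ⟨S, hSfin, hS⟩ := Submodule.fg_def.mp
    (IsNoetherian.noetherian (frobClosureIdeal p I))
  lift S to Finset R using hSfin
  -- choose an exponent for each generator
  have hmem : ∀ x ∈ S, ∃ m : ℕ, x ^ p ^ m ∈ frobPow I (p ^ m) := by
    intro x hx
    have : x ∈ frobClosureIdeal p I := by
      rw [← hS]; exact Submodule.subset_span hx
    exact this
  choose f hf using hmem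
  set m : ℕ := S.attach.sup (fun x => f x.1 x.2) with hm
  refine ⟨m, le_antisymm ?_ ?_⟩
  · rw [Ideal.span_le]
    rintro _ ⟨x, hx, rfl⟩
    have hx' : x ∈ Ideal.span (S : Set R) := by
      have hxI : x ∈ frobClosureIdeal p I := hx
      rw [← hS] at hxI
      exact hxI
    -- map via iterateFrobenius
    have := Ideal.mem_map_of_mem (iterateFrobenius R p m) hx'
    rw [Ideal.map_span] at this
    rw [SetLike.mem_coe]
    have hle : Ideal.span (⇑(iterateFrobenius R p m) '' (S : Set R))
        ≤ frobPow I (p ^ m) := by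
      rw [Ideal.span_le]
      rintro _ ⟨y, hy, rfl⟩
      rw [SetLike.mem_coe, iterateFrobenius_def]
      exact frobPow_mem_mono p I (Finset.le_sup (Finset.mem_attach S ⟨y, hy⟩)) (hf y hy)
    have := hle this
    rwa [iterateFrobenius_def] at this
  · rw [frobPow, Ideal.span_le]
    rintro _ ⟨x, hx, rfl⟩
    exact Ideal.subset_span ⟨x, self_subset_frobClosureSet p I hx, rfl⟩

end Exists

theorem fte_le_fte_frobPow_add {R : Type*} [CommRing R] [IsNoetherianRing R]
    (p : ℕ) (hp : p.Prime) [CharP R p] (I : Ideal R) (e : ℕ) :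
    fte p I ≤ fte p (frobPow I (p ^ e)) + e := by
  haveI : Fact p.Prime := ⟨hp⟩
  set J := frobPow I (p ^ e) with hJ
  set e' := fte p J with he'
  have hJmem : Ideal.span ((fun r => r ^ p ^ e') '' frobClosureSet p J)
      = frobPow J (p ^ e') := Nat.sInf_mem (exists_fte_mem p J)
  apply Nat.sInf_le
  show Ideal.span ((fun r => r ^ p ^ (e' + e)) '' frobClosureSet p I)
      = frobPow I (p ^ (e' + e))
  refine le_antisymm ?_ ?_
  · rw [Ideal.span_le]
    rintro _ ⟨x, hx, rfl⟩
    rw [SetLike.mem_coe]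
    -- x ^ p ^ e ∈ frobClosureSet p J
    have hxJ : x ^ p ^ e ∈ frobClosureSet p J := by
      obtain ⟨k, hk⟩ := hx
      refine ⟨k, ?_⟩
      rw [hJ, frobPow_frobPow, ← pow_mul, ← pow_add]
      exact frobPow_mem_mono p I (Nat.le_add_left k e) hk
    have : (x ^ p ^ e) ^ p ^ e' ∈ frobPow J (p ^ e') := by
      rw [← hJmem]
      exact Ideal.subset_span ⟨x ^ p ^ e, hxJ, rfl⟩
    rw [hJ, frobPow_frobPow, ← pow_mul, ← pow_add, Nat.add_comm e e'] at this
    exact this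
  · rw [frobPow, Ideal.span_le]
    rintro _ ⟨x, hx, rfl⟩
    exact Ideal.subset_span ⟨x, self_subset_frobClosureSet p I hx, rfl⟩
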